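/- arXiv:2410.12503 — 2 statements merged into one kernel-verified Lean document; each statement's English description precedes it below -/
import Mathlib

section
/- A Lebesgue measurable set A ⊆ ℝ is closed and discrete in the I-sparse set topology if and only if λ(A) = 0. Precisely: λ(A) = 0 if and only if ℝ \ A ∈ 𝒰 and A has no limit points in (ℝ, 𝒰), i.e. for every x ∈ ℝ there exists U ∈ 𝒰 with x ∈ U and U ∩ (A \ {x}) = ∅. -/
open MeasureTheory Filter Set
open scoped ENNReal

noncomputable section

/-- A nontrivial admissible ideal of subsets of ℕ: closed under subsets and
finite unions, contains every finite set, and does not contain ℕ itself. -/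
structure AdmissibleIdeal : Type where
  carrier : Set (Set ℕ)
  subset_mem : ∀ ⦃A B : Set ℕ⦄, A ∈ carrier → B ⊆ A → B ∈ carrier
  union_mem : ∀ ⦃A B : Set ℕ⦄, A ∈ carrier → B ∈ carrier → A ∪ B ∈ carrier
  finite_mem : ∀ A : Set ℕ, A.Finite → A ∈ carrier
  univ_not_mem : (Set.univ : Set ℕ) ∉ carrier

/-- The filter F(I) = {M ⊆ ℕ : ℕ \ M ∈ I} associated with the ideal I. -/
def AdmissibleIdeal.filter (I : AdmissibleIdeal) : Filter ℕ :=
  Filter.comk (· ∈ I.carrier) (I.finite_mem ∅ Set.finite_empty)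
    (fun _t ht _s hs => I.subset_mem ht hs)
    (fun _s hs _t ht => I.union_mem hs ht)

/-- A sequence of closed intervals admissible about the point `p`:
each `J n` is a closed interval containing `p`, and
`{n : 0 < λ(J n) < 1/n} ∈ F(I)`. -/
def AdmissibleSeq (I : AdmissibleIdeal) (p : ℝ) (J : ℕ → Set ℝ) : Prop :=
  (∀ n, ∃ a b : ℝ, a ≤ b ∧ J n = Set.Icc a b) ∧ (∀ n, p ∈ J n) ∧
    {n : ℕ | 0 < volume (J n) ∧ volume (J n) < (n : ℝ≥0∞)⁻¹} ∈ I.filter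

/-- The sequence n ↦ λ(E ∩ J n)/λ(J n) (interpreted as 0 when λ(J n) = 0). -/
def ratioSeq (E : Set ℝ) (J : ℕ → Set ℝ) : ℕ → ℝ :=
  fun n => (volume (E ∩ J n) / volume (J n)).toReal

/-- Upper I-density of `E` at `p`: sup over admissible sequences of the
limsup along `F(I)` of the measure ratios. -/
def upperIDensity (I : AdmissibleIdeal) (p : ℝ) (E : Set ℝ) : ℝ :=
  sSup {l : ℝ | ∃ J : ℕ → Set ℝ, AdmissibleSeq I p J ∧
    l = Filter.limsup (ratioSeq E J) I.filter}

/-- Lower I-density of `E` at `p`: inf over admissible sequences of the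
liminf along `F(I)` of the measure ratios. -/
def lowerIDensity (I : AdmissibleIdeal) (p : ℝ) (E : Set ℝ) : ℝ :=
  sInf {l : ℝ | ∃ J : ℕ → Set ℝ, AdmissibleSeq I p J ∧
    l = Filter.liminf (ratioSeq E J) I.filter}

/-- `C` is a measurable cover of `A`. -/
def IsMeasurableCover (C A : Set ℝ) : Prop :=
  MeasurableSet C ∧ A ⊆ C ∧
    ∀ F : Set ℝ, MeasurableSet F → F ⊆ C \ A → volume F = 0

/-- `A` is I-sparse at `x`, i.e. `A ∈ S_I(x)`. -/
def ISparseAt (I : AdmissibleIdeal) (A : Set ℝ) (x : ℝ) : Prop :=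
  ∀ B : Set ℝ, MeasurableSet B → upperIDensity I x B < 1 →
    ∀ C : Set ℝ, IsMeasurableCover C A → upperIDensity I x (C ∪ B) < 1

/-- The I-density topology T_I. -/
def IDensityTopology (I : AdmissibleIdeal) : Set (Set ℝ) :=
  {E | MeasurableSet E ∧ ∀ x ∈ E, lowerIDensity I x E = 1}

/-- The I-sparse set topology 𝒰. -/
def sparseTop (I : AdmissibleIdeal) : Set (Set ℝ) :=
  {E | ∀ x ∈ E, ISparseAt I Eᶜ x}

open Metric Topology

/-!
Null sets are sparse at every point, since adding a null set changes no measure ratio; hence the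
complements of `A` and of every `A \ {x}` are open when `A` is null. Conversely, if `λ(A) > 0`,
pick a Lebesgue density point `x ∈ A`. Shrinking centred intervals form an admissible sequence along
which `A` has ratio tending to `1`, so `A` has upper `I`-density `1` at `x`. But a neighbourhood `U`
of `x` missing `A \ {x}` makes `A` almost contained in the sparse set `Uᶜ`, whose measurable cover
has upper `I`-density `< 1` at `x`.
-/

namespace AdmissibleIdeal

variable (I : AdmissibleIdeal)

instance filter_neBot : I.filter.NeBot := by
  refine neBot_iff.mpr fun h => I.univ_not_mem ?_
  have hempty : (∅ : Set ℕ) ∈ I.filter := h ▸ mem_bot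
  simpa [AdmissibleIdeal.filter, mem_comk] using hempty

theorem filter_le_atTop : I.filter ≤ atTop := by
  rw [← Nat.cofinite_eq_atTop]
  intro s hs
  simpa [AdmissibleIdeal.filter, mem_comk] using I.finite_mem _ hs

end AdmissibleIdeal

theorem IsMeasurableCover.measure_eq {C A : Set ℝ} (h : IsMeasurableCover C A) :
    volume C = volume A := by
  have hC_ae_le : C ≤ᵐ[volume] toMeasurable volume A :=
    ae_le_set.mpr <| h.2.2 _ (h.1.diff (measurableSet_toMeasurable _ _))
      (sdiff_subset_sdiff_right (subset_toMeasurable _ _))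
  refine le_antisymm ?_ (measure_mono h.2.1)
  simpa using measure_mono_ae hC_ae_le

theorem isMeasurableCover_toMeasurable (A : Set ℝ) :
    IsMeasurableCover (toMeasurable volume A) A := by
  refine ⟨measurableSet_toMeasurable _ _, subset_toMeasurable _ _, fun F hF hFsub => ?_⟩
  have hAF : A ∩ F = ∅ := eq_empty_of_forall_notMem fun y hy => (hFsub hy.2).2 hy.1
  rw [← inter_eq_right.mpr fun y hy => (hFsub hy).1,
    Measure.measure_toMeasurable_inter_of_sFinite hF, hAF, measure_empty]

-- The factor `2` makes the interval of radius `admissibleRadius n` shorter than `1 / n`.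
def admissibleRadius (n : ℕ) : ℝ := (2 * ((n : ℝ) + 1))⁻¹

theorem admissibleRadius_pos (n : ℕ) : 0 < admissibleRadius n := by
  unfold admissibleRadius
  positivity

theorem tendsto_admissibleRadius : Tendsto admissibleRadius atTop (𝓝[>] 0) := by
  refine tendsto_nhdsWithin_of_tendsto_nhds_of_eventually_within _ ?_
    (Eventually.of_forall admissibleRadius_pos)
  refine Tendsto.inv_tendsto_atTop (Tendsto.const_mul_atTop two_pos ?_)
  exact tendsto_atTop_add_const_right _ 1 tendsto_natCast_atTop_atTop

theorem admissibleSeq_closedBall (I : AdmissibleIdeal) (p : ℝ) :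
    AdmissibleSeq I p fun n => closedBall p (admissibleRadius n) := by
  refine ⟨fun n => ⟨_, _, by linarith [admissibleRadius_pos n], Real.closedBall_eq_Icc⟩,
    fun n => mem_closedBall_self (admissibleRadius_pos n).le,
    Filter.Eventually.of_forall fun n => ?_⟩
  have hvol : volume (closedBall p (admissibleRadius n)) = ((n : ℝ≥0∞) + 1)⁻¹ := by
    rw [Real.volume_closedBall, admissibleRadius, mul_inv, ← mul_assoc, mul_inv_cancel₀ two_ne_zero,
      one_mul, ENNReal.ofReal_inv_of_pos (by positivity)]
    norm_cast
  rw [hvol]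
  exact ⟨by simp, ENNReal.inv_lt_inv.mpr (ENNReal.lt_add_right (by simp) one_ne_zero)⟩

section Density

variable {I : AdmissibleIdeal} {p : ℝ} {E F : Set ℝ} {J : ℕ → Set ℝ}

theorem ratioSeq_nonneg (E : Set ℝ) (J : ℕ → Set ℝ) (n : ℕ) : 0 ≤ ratioSeq E J n :=
  ENNReal.toReal_nonneg

theorem measure_inter_div_measure_le_one (E K : Set ℝ) : volume (E ∩ K) / volume K ≤ 1 :=
  ENNReal.div_le_of_le_mul (by rw [one_mul]; exact measure_mono inter_subset_right)

theorem ratioSeq_le_one (E : Set ℝ) (J : ℕ → Set ℝ) (n : ℕ) : ratioSeq E J n ≤ 1 :=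
  (ENNReal.toReal_mono ENNReal.one_ne_top (measure_inter_div_measure_le_one E (J n))).trans_eq
    ENNReal.toReal_one

theorem ratioSeq_mono_ae (h : E ≤ᵐ[volume] F) (n : ℕ) : ratioSeq E J n ≤ ratioSeq F J n :=
  ENNReal.toReal_mono (ne_top_of_le_ne_top ENNReal.one_ne_top
      (measure_inter_div_measure_le_one F (J n))) <|
    ENNReal.div_le_div_right (measure_mono_ae (ae_le_set_inter h EventuallyLE.rfl)) _

theorem limsup_ratioSeq_mono_ae (I : AdmissibleIdeal) (J : ℕ → Set ℝ) (h : E ≤ᵐ[volume] F) :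
    limsup (ratioSeq E J) I.filter ≤ limsup (ratioSeq F J) I.filter :=
  limsup_le_limsup (Eventually.of_forall (ratioSeq_mono_ae h))
    (isCoboundedUnder_le_of_le I.filter (ratioSeq_nonneg E J))
    (isBoundedUnder_of ⟨1, ratioSeq_le_one F J⟩)

theorem le_upperIDensity (hJ : AdmissibleSeq I p J) :
    limsup (ratioSeq E J) I.filter ≤ upperIDensity I p E := by
  refine le_csSup ⟨1, ?_⟩ ⟨J, hJ, rfl⟩
  rintro _ ⟨J', -, rfl⟩
  exact limsup_le_of_le (isCoboundedUnder_le_of_le I.filter (ratioSeq_nonneg E J'))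
    (Eventually.of_forall (ratioSeq_le_one E J'))

theorem upperIDensity_le {c : ℝ}
    (h : ∀ J, AdmissibleSeq I p J → limsup (ratioSeq E J) I.filter ≤ c) :
    upperIDensity I p E ≤ c :=
  csSup_le ⟨_, _, admissibleSeq_closedBall I p, rfl⟩ (by rintro _ ⟨J, hJ, rfl⟩; exact h J hJ)

theorem upperIDensity_mono_ae (h : E ≤ᵐ[volume] F) : upperIDensity I p E ≤ upperIDensity I p F :=
  upperIDensity_le fun J hJ => (limsup_ratioSeq_mono_ae I J h).trans (le_upperIDensity hJ)

theorem upperIDensity_congr_ae (h : E =ᵐ[volume] F) : upperIDensity I p E = upperIDensity I p F :=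
  (upperIDensity_mono_ae h.le).antisymm (upperIDensity_mono_ae h.symm.le)

theorem upperIDensity_empty_lt_one : upperIDensity I p ∅ < 1 := by
  refine (upperIDensity_le (E := ∅) fun J _ => ?_).trans_lt zero_lt_one
  have hzero : ratioSeq ∅ J = fun _ => 0 := funext fun n => by simp [ratioSeq]
  rw [hzero, limsup_const]

theorem one_le_upperIDensity_of_tendsto
    (hx : Tendsto (fun r => volume (E ∩ closedBall p r) / volume (closedBall p r)) (𝓝[>] 0) (𝓝 1)) :
    1 ≤ upperIDensity I p E := by
  have hratio : Tendsto (ratioSeq E fun n => closedBall p (admissibleRadius n)) atTop (𝓝 1) :=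
    (ENNReal.tendsto_toReal ENNReal.one_ne_top).comp (hx.comp tendsto_admissibleRadius)
  calc (1 : ℝ) = limsup (ratioSeq E fun n => closedBall p (admissibleRadius n)) I.filter :=
        ((hratio.mono_left I.filter_le_atTop).limsup_eq).symm
    _ ≤ upperIDensity I p E := le_upperIDensity (admissibleSeq_closedBall I p)

end Density

section Sparse

variable {I : AdmissibleIdeal} {S : Set ℝ} {x : ℝ}

theorem iSparseAt_of_measure_eq_zero (hS : volume S = 0) : ISparseAt I S x := by
  intro B _ hB C hC
  have hC_null : C =ᵐ[volume] (∅ : Set ℝ) := ae_eq_empty.mpr (hC.measure_eq.trans hS)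
  rwa [upperIDensity_congr_ae (union_ae_eq_right_of_ae_eq_empty hC_null)]

theorem compl_mem_sparseTop_of_measure_eq_zero (hS : volume S = 0) : Sᶜ ∈ sparseTop I :=
  fun _ _ => by
    rw [compl_compl]
    exact iSparseAt_of_measure_eq_zero hS

theorem ISparseAt.upperIDensity_lt_one_of_ae_le {E : Set ℝ} (h : ISparseAt I S x)
    (hE : E ≤ᵐ[volume] S) : upperIDensity I x E < 1 := by
  have hlt := h ∅ MeasurableSet.empty upperIDensity_empty_lt_one _
    (isMeasurableCover_toMeasurable S)
  rw [union_empty] at hlt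
  exact (upperIDensity_mono_ae (hE.trans (subset_toMeasurable volume S).eventuallyLE)).trans_lt hlt

end Sparse

theorem sparseTop_closed_discrete_iff_null_general (I : AdmissibleIdeal) (A : Set ℝ) :
    volume A = 0 ↔
      (Aᶜ ∈ sparseTop I ∧
        ∀ x : ℝ, ∃ U ∈ sparseTop I, x ∈ U ∧ U ∩ (A \ {x}) = ∅) := by
  refine ⟨fun hA => ⟨compl_mem_sparseTop_of_measure_eq_zero hA, fun x =>
    ⟨(A \ {x})ᶜ, compl_mem_sparseTop_of_measure_eq_zero (measure_mono_null sdiff_subset hA),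
      by simp, compl_inter_self _⟩⟩, ?_⟩
  rintro ⟨-, hdiscrete⟩
  by_contra hA
  obtain ⟨x, -, hx⟩ := Measure.exists_mem_of_measure_ne_zero_of_ae hA
    (Besicovitch.ae_tendsto_measure_inter_div volume A)
  obtain ⟨U, hU, hxU, hUA⟩ := hdiscrete x
  have hA_ae_le : A ≤ᵐ[volume] Uᶜ := by
    refine (sdiff_null_ae_eq_self (Real.volume_singleton (a := x))).symm.le.trans ?_
    exact Eventually.of_forall fun y hy hyU => hUA.subset ⟨hyU, hy⟩
  exact (one_le_upperIDensity_of_tendsto hx).not_gt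
    ((hU x hxU).upperIDensity_lt_one_of_ae_le hA_ae_le)

/-- A measurable set is closed and discrete in the I-sparse set topology iff it is
Lebesgue null. -/
theorem sparseTop_closed_discrete_iff_null (I : AdmissibleIdeal) (A : Set ℝ)
    (hA : MeasurableSet A) :
    volume A = 0 ↔
      (Aᶜ ∈ sparseTop I ∧
        ∀ x : ℝ, ∃ U ∈ sparseTop I, x ∈ U ∧ U ∩ (A \ {x}) = ∅) :=
  sparseTop_closed_discrete_iff_null_general I A
end
end

section
/- Every nonempty member of the I-sparse set topology is uncountable: if U ∈ 𝒰 and U ≠ ∅, then U is an uncountable set. -/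
open MeasureTheory Filter Set
open scoped ENNReal

noncomputable section

instance AdmissibleIdeal.filter_neBot_s18 (I : AdmissibleIdeal) : I.filter.NeBot := by
  refine Filter.neBot_iff.2 fun h => I.univ_not_mem ?_
  simpa using Filter.mem_comk.1 (h ▸ Filter.mem_bot : (∅ : Set ℕ) ∈ I.filter)

lemma admissibleSeq_Icc_inv_succ (I : AdmissibleIdeal) (x : ℝ) :
    AdmissibleSeq I x (fun n => Icc x (x + ((n : ℝ) + 1)⁻¹)) := by
  have hpos (n : ℕ) : (0 : ℝ) < ((n : ℝ) + 1)⁻¹ := by positivity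
  refine ⟨fun n => ⟨_, _, by linarith [hpos n], rfl⟩,
    fun n => left_mem_Icc.2 (by linarith [hpos n]), Filter.univ_mem' fun n => ?_⟩
  have hvol : volume (Icc x (x + ((n : ℝ) + 1)⁻¹)) = ((n : ℝ≥0∞) + 1)⁻¹ := by
    rw [Real.volume_Icc, add_sub_cancel_left, ENNReal.ofReal_inv_of_pos (by positivity)]
    norm_cast
  rw [mem_ofPred_eq, hvol]
  exact ⟨ENNReal.inv_pos.2 (by simp),
    ENNReal.inv_lt_inv.2 (ENNReal.lt_add_right (by simp) one_ne_zero)⟩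

lemma upperIDensity_eq_of_eventuallyEq_const {I : AdmissibleIdeal} {p : ℝ} {E : Set ℝ} {c : ℝ}
    (h : ∀ J, AdmissibleSeq I p J → ratioSeq E J =ᶠ[I.filter] fun _ => c) :
    upperIDensity I p E = c := by
  have hset :
      {l : ℝ | ∃ J, AdmissibleSeq I p J ∧ l = limsup (ratioSeq E J) I.filter} = {c} := by
    refine eq_singleton_iff_unique_mem.2 ⟨⟨_, admissibleSeq_Icc_inv_succ I p, ?_⟩, ?_⟩
    · rw [limsup_congr (h _ (admissibleSeq_Icc_inv_succ I p)), limsup_const]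
    · rintro l ⟨J, hJ, rfl⟩
      rw [limsup_congr (h J hJ), limsup_const]
  rw [upperIDensity, hset, csSup_singleton]

lemma upperIDensity_empty (I : AdmissibleIdeal) (p : ℝ) : upperIDensity I p ∅ = 0 :=
  upperIDensity_eq_of_eventuallyEq_const fun J _ =>
    Eventually.of_forall fun n => by simp [ratioSeq]

lemma upperIDensity_univ (I : AdmissibleIdeal) (p : ℝ) : upperIDensity I p univ = 1 := by
  refine upperIDensity_eq_of_eventuallyEq_const fun J ⟨hIcc, _, hsmall⟩ => ?_
  filter_upwards [hsmall] with n hn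
  obtain ⟨a, b, -, hab⟩ := hIcc n
  have hfin : volume (J n) ≠ ⊤ := by simp [hab, Real.volume_Icc]
  simp [ratioSeq, ENNReal.div_self hn.1.ne' hfin]

lemma isMeasurableCover_univ {A : Set ℝ} (h : volume Aᶜ = 0) : IsMeasurableCover univ A :=
  ⟨MeasurableSet.univ, subset_univ A, fun _ _ hF => measure_mono_null (fun _ hy => (hF hy).2) h⟩

/-- Test sparseness with `B = ∅` (upper density `0`) and the cover `ℝ` (upper density `1`). -/
lemma not_iSparseAt_of_measure_compl_eq_zero (I : AdmissibleIdeal) {A : Set ℝ} (x : ℝ)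
    (h : volume Aᶜ = 0) : ¬ ISparseAt I A x := fun hA => by
  have := hA ∅ MeasurableSet.empty (by simp [upperIDensity_empty]) univ
    (isMeasurableCover_univ h)
  simp [upperIDensity_univ] at this

/-- Every nonempty member of the I-sparse set topology is uncountable. -/
theorem sparseTop_nonempty_uncountable (I : AdmissibleIdeal) (U : Set ℝ)
    (hU : U ∈ sparseTop I) (hne : U.Nonempty) :
    ¬ U.Countable := fun hcount => by
  obtain ⟨x, hx⟩ := hne
  exact not_iSparseAt_of_measure_compl_eq_zero I x (by simpa using hcount.measure_zero volume)
    (hU x hx)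
end
end
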